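/- arXiv:1312.2056 — 3 statements merged into one kernel-verified Lean document; each statement's English description precedes it below -/
import Mathlib

section
/- If the induced hyperspace system (K(X), T_K) is an M-system (transitive with dense minimal points), then (X,T) is a weakly mixing M-system. -/
open MeasureTheory Topology Set Function TopologicalSpace

noncomputable section

namespace Paper

/-- The orbit closure of a point. -/
def orbitClosure {α : Type*} [TopologicalSpace α] (T : α → α) (x : α) : Set α :=
  closure (Set.range fun n : ℕ => T^[n] x)

/-- Topological transitivity: `N(U,V)` is infinite for all non-empty open `U, V`. -/
def IsTransitive {α : Type*} [TopologicalSpace α] (T : α → α) : Prop :=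
  ∀ U V : Set α, IsOpen U → U.Nonempty → IsOpen V → V.Nonempty →
    {n : ℕ | (U ∩ T^[n] ⁻¹' V).Nonempty}.Infinite

/-- Weak mixing: the product system is transitive. -/
def IsWeaklyMixing {α : Type*} [TopologicalSpace α] (T : α → α) : Prop :=
  IsTransitive (Prod.map T T)

/-- Total transitivity. -/
def IsTotallyTransitive {α : Type*} [TopologicalSpace α] (T : α → α) : Prop :=
  ∀ n : ℕ, 0 < n → IsTransitive (T^[n])

/-- A minimal point: its orbit closure is a minimal subsystem. -/
def IsMinimalPoint {α : Type*} [TopologicalSpace α] (T : α → α) (x : α) : Prop :=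
  ∀ Y : Set α, Y.Nonempty → IsClosed Y → MapsTo T Y Y → Y ⊆ orbitClosure T x →
    Y = orbitClosure T x

def IsPeriodicPoint {α : Type*} (T : α → α) (x : α) : Prop :=
  ∃ n : ℕ, 0 < n ∧ T^[n] x = x

def IsPeriodicSystem {α : Type*} (T : α → α) : Prop :=
  ∃ m : ℕ, 0 < m ∧ T^[m] = id

def IsPointwisePeriodic {α : Type*} (T : α → α) : Prop :=
  ∀ x : α, IsPeriodicPoint T x

def IsMSystem {α : Type*} [TopologicalSpace α] (T : α → α) : Prop :=
  IsTransitive T ∧ Dense {x : α | IsMinimalPoint T x}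

def IsPSystem {α : Type*} [TopologicalSpace α] (T : α → α) : Prop :=
  IsTransitive T ∧ Dense {x : α | IsPeriodicPoint T x}

/-- An E-system: transitive with an invariant (Borel) probability measure of full support. -/
def IsESystem {α : Type*} [TopologicalSpace α] (T : α → α) : Prop :=
  IsTransitive T ∧
    let _i : MeasurableSpace α := borel α
    ∃ μ : Measure α, IsProbabilityMeasure μ ∧ μ.map T = μ ∧
      ∀ U : Set α, IsOpen U → U.Nonempty → 0 < μ U

/-- A proximal pair: the orbit closure of `(x, y)` meets the diagonal. -/
def IsProximalPair {α : Type*} [TopologicalSpace α] (T : α → α) (x y : α) : Prop :=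
  ∃ z : α, (z, z) ∈ closure (Set.range fun n : ℕ => (T^[n] x, T^[n] y))

def IsDistalPoint {α : Type*} [TopologicalSpace α] (T : α → α) (x : α) : Prop :=
  ∀ y ∈ orbitClosure T x, IsProximalPair T x y → y = x

def IsDistalSystem {α : Type*} [TopologicalSpace α] (T : α → α) : Prop :=
  ∀ x y : α, IsProximalPair T x y → x = y

/-- The induced map on the hyperspace of non-empty compact (= closed) subsets. -/
def TK {α : Type*} [TopologicalSpace α] (T : α → α) (hT : Continuous T)
    (C : NonemptyCompacts α) : NonemptyCompacts α :=
  ⟨⟨T '' (C : Set α), C.isCompact.image hT⟩, C.nonempty.image T⟩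

/-- The induced map on the space of Borel probability measures. -/
def TM {α : Type*} [TopologicalSpace α] [MeasurableSpace α] [BorelSpace α] (T : α → α)
    (hT : Continuous T) (μ : ProbabilityMeasure α) : ProbabilityMeasure α :=
  μ.map hT.measurable.aemeasurable

/-- Almost dense periodic sets. -/
def AlmostDensePeriodicSets {α : Type*} [TopologicalSpace α] (T : α → α) : Prop :=
  let _i : MeasurableSpace α := borel α
  ∀ U : Set α, IsOpen U → U.Nonempty → ∀ ε : ℝ, 0 < ε →
    ∃ k : ℕ, 0 < k ∧ ∃ μ : Measure α, IsProbabilityMeasure μ ∧ μ.map (T^[k]) = μ ∧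
      μ Uᶜ < ENNReal.ofReal ε

def IsAlmostHYSystem {α : Type*} [TopologicalSpace α] (T : α → α) : Prop :=
  IsTotallyTransitive T ∧ AlmostDensePeriodicSets T

def IsFactorMap {α β : Type*} [TopologicalSpace α] [TopologicalSpace β]
    (T : α → α) (S : β → β) (π : α → β) : Prop :=
  Continuous π ∧ Surjective π ∧ π ∘ T = S ∘ π

def IsJoining {α β : Type*} [TopologicalSpace α] [TopologicalSpace β]
    (T : α → α) (S : β → β) (J : Set (α × β)) : Prop :=
  J.Nonempty ∧ IsClosed J ∧ MapsTo (Prod.map T S) J J ∧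
    Prod.fst '' J = Set.univ ∧ Prod.snd '' J = Set.univ

def AreDisjoint {α β : Type*} [TopologicalSpace α] [TopologicalSpace β]
    (T : α → α) (S : β → β) : Prop :=
  ∀ J : Set (α × β), IsJoining T S J → J = Set.univ

def IsMinimalSystem {β : Type*} [TopologicalSpace β] (S : β → β) : Prop :=
  ∀ Y : Set β, Y.Nonempty → IsClosed Y → MapsTo S Y Y → Y = Set.univ

/-- Disjoint from every minimal system (on a compact metric space). -/
def DisjointFromAllMinimal {α : Type*} [TopologicalSpace α] (T : α → α) : Prop :=
  ∀ (β : Type) (_ : MetricSpace β) (_ : CompactSpace β) (S : β → β),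
    Continuous S → Surjective S → IsMinimalSystem S → AreDisjoint T S

/-!
Transitivity of `T_K` between the open sets `{K | K ⊆ U}` and `{K | K meets V₁ and V₂}` yields
common hitting times from `U` to `V₁` and to `V₂`; applying this to `U₁ ∩ T⁻ⁿ U₂` for a hitting
time `n` from `U₁` to `U₂` gives weak mixing (surjectivity of `T` is automatic for a transitive
map of a compact space).

If `A` is a minimal point of `T_K`, its orbit closure `𝓜` is a minimal subsystem of `K(X)`. The
union of the members of `𝓜` is closed and invariant, hence contains a minimal set `m` of `T`, and
the members of `𝓜` meeting `m` form a closed invariant subset of `𝓜`, hence all of `𝓜`. So `A`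
contains a point of `m`, which is a minimal point of `T`; since `A` can be chosen inside any open
`U`, minimal points are dense.

Mathlib's Hausdorff-metric topology on `NonemptyCompacts X` is definitionally the Vietoris
topology, so everything before the main theorem is stated for compact Hausdorff spaces.
-/

section

variable {X : Type*}

def hittingTimes (T : X → X) (U V : Set X) : Set ℕ :=
  {n | (U ∩ T^[n] ⁻¹' V).Nonempty}

theorem hittingTimes_mono {T : X → X} {U U' V V' : Set X} (hU : U ⊆ U') (hV : V ⊆ V') :
    hittingTimes T U V ⊆ hittingTimes T U' V' :=
  fun _ ⟨x, hxU, hxV⟩ => ⟨x, hU hxU, hV hxV⟩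

theorem hittingTimes_prodMap {Y : Type*} (T : X → X) (S : Y → Y) (U₁ V₁ : Set X)
    (U₂ V₂ : Set Y) :
    hittingTimes (Prod.map T S) (U₁ ×ˢ U₂) (V₁ ×ˢ V₂) =
      hittingTimes T U₁ V₁ ∩ hittingTimes S U₂ V₂ := by
  ext n
  simp only [hittingTimes, mem_inter_iff, mem_ofPred_eq, Prod.map_iterate, preimage_prod_map_prod,
    prod_inter_prod, prod_nonempty_iff]

theorem hittingTimes_inter_preimage_subset (T : X → X) (n : ℕ) (U U' V' : Set X) :
    hittingTimes T (U ∩ T^[n] ⁻¹' U') (T^[n] ⁻¹' V') ⊆ hittingTimes T U' V' := by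
  rintro m ⟨x, ⟨-, hxU'⟩, hxV'⟩
  refine ⟨T^[n] x, hxU', ?_⟩
  rwa [mem_preimage, ← iterate_add_apply, add_comm, iterate_add_apply]

structure IsSubsystem [TopologicalSpace X] (T : X → X) (s : Set X) : Prop where
  nonempty : s.Nonempty
  isClosed : IsClosed s
  mapsTo : MapsTo T s s

end

section

variable {X : Type*} [TopologicalSpace X] {T : X → X}

theorem isSubsystem_orbitClosure (hT : Continuous T) (x : X) :
    IsSubsystem T (orbitClosure T x) where
  nonempty := ⟨x, subset_closure ⟨0, rfl⟩⟩
  isClosed := isClosed_closure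
  mapsTo := MapsTo.closure (fun _ ⟨n, hn⟩ => ⟨n + 1, by simp only [iterate_succ_apply', hn]⟩) hT

theorem orbitClosure_subset {s : Set X} (hs : IsClosed s) (hTs : MapsTo T s s) {x : X}
    (hx : x ∈ s) : orbitClosure T x ⊆ s :=
  closure_minimal (range_subset_iff.2 fun n => hTs.iterate n hx) hs

theorem isMinimalPoint_iff_minimal (hT : Continuous T) (x : X) :
    IsMinimalPoint T x ↔ Minimal (IsSubsystem T) (orbitClosure T x) :=
  ⟨fun h => ⟨isSubsystem_orbitClosure hT x, fun Y hY hYx => (h Y hY.1 hY.2 hY.3 hYx).ge⟩,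
    fun h _ hY hYc hYT hYx => h.eq_of_subset ⟨hY, hYc, hYT⟩ hYx⟩

theorem isMinimalPoint_of_mem_minimal (hT : Continuous T) {m : Set X}
    (hm : Minimal (IsSubsystem T) m) {x : X} (hx : x ∈ m) : IsMinimalPoint T x := by
  have hxm : orbitClosure T x = m := hm.eq_of_subset (isSubsystem_orbitClosure hT x)
    (orbitClosure_subset hm.prop.isClosed hm.prop.mapsTo hx)
  rwa [isMinimalPoint_iff_minimal hT, hxm]

theorem IsSubsystem.exists_minimal_subset [CompactSpace X] {s : Set X} (hs : IsSubsystem T s) :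
    ∃ m ⊆ s, Minimal (IsSubsystem T) m := by
  refine zorn_superset_nonempty {t | IsSubsystem T t} (fun c hc hchain hcne => ?_) s hs
  refine ⟨⋂₀ c, ⟨?_, isClosed_sInter fun t ht => (hc ht).isClosed,
    fun y hy t ht => (hc ht).mapsTo (hy t ht)⟩, fun t ht => sInter_subset_of_mem ht⟩
  have : Nonempty c := hcne.to_subtype
  exact IsCompact.nonempty_sInter_of_directed_nonempty_isCompact_isClosed
    (IsChain.directedOn (r := fun s t : Set X => s ⊇ t) hchain.symm) (fun t ht => (hc ht).nonempty)
    (fun t ht => (hc ht).isClosed.isCompact) (fun t ht => (hc ht).isClosed)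

theorem IsTransitive.surjective [CompactSpace X] [T2Space X] (hT : Continuous T)
    (h : IsTransitive T) : Surjective T := by
  -- `range T` is closed, and a point outside it can only be hit at time `0`.
  by_contra hs
  obtain ⟨y, hy⟩ : (range T)ᶜ.Nonempty := by
    rwa [nonempty_compl, Ne, range_eq_univ]
  refine h univ (range T)ᶜ isOpen_univ ⟨y, trivial⟩
    (isCompact_range hT).isClosed.isOpen_compl ⟨y, hy⟩ ((finite_singleton 0).subset ?_)
  rintro (_ | n) ⟨x, -, hx⟩
  · rfl
  · exact absurd ⟨_, (iterate_succ_apply' T n x).symm⟩ hx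

end

section

variable {X : Type*} [TopologicalSpace X] {T : X → X} {hT : Continuous T}

theorem coe_iterate_TK (n : ℕ) (K : NonemptyCompacts X) :
    (((TK T hT)^[n] K : NonemptyCompacts X) : Set X) = T^[n] '' K := by
  induction n generalizing K with
  | zero => simp
  | succ n ih => rw [iterate_succ_apply, ih, iterate_succ, image_comp]; rfl

theorem IsTransitive.infinite_hittingTimes_pair_of_TK (h : IsTransitive (TK T hT))
    {U V₁ V₂ : Set X} (hU : IsOpen U) (hU' : U.Nonempty) (hV₁ : IsOpen V₁)
    (hV₁' : V₁.Nonempty) (hV₂ : IsOpen V₂) (hV₂' : V₂.Nonempty) :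
    (hittingTimes T U V₁ ∩ hittingTimes T U V₂).Infinite := by
  obtain ⟨u, hu⟩ := hU'
  obtain ⟨v₁, hv₁⟩ := hV₁'
  obtain ⟨v₂, hv₂⟩ := hV₂'
  refine (h {K | (K : Set X) ⊆ U}
    ({K | ((K : Set X) ∩ V₁).Nonempty} ∩ {K | ((K : Set X) ∩ V₂).Nonempty})
    (NonemptyCompacts.isOpen_subsets_of_isOpen hU) ⟨{u}, by simpa using hu⟩
    ((NonemptyCompacts.isOpen_inter_nonempty_of_isOpen hV₁).inter
      (NonemptyCompacts.isOpen_inter_nonempty_of_isOpen hV₂))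
    ⟨⟨⟨{v₁, v₂}, (toFinite _).isCompact⟩, insert_nonempty _ _⟩,
      ⟨v₁, .inl rfl, hv₁⟩, ⟨v₂, .inr rfl, hv₂⟩⟩).mono ?_
  rintro n ⟨K, hKU, hK₁, hK₂⟩
  simp only [mem_ofPred_eq, coe_iterate_TK] at hK₁ hK₂
  obtain ⟨_, ⟨x₁, hx₁, rfl⟩, h₁⟩ := hK₁
  obtain ⟨_, ⟨x₂, hx₂, rfl⟩, h₂⟩ := hK₂
  exact ⟨⟨x₁, hKU hx₁, h₁⟩, ⟨x₂, hKU hx₂, h₂⟩⟩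

theorem IsTransitive.of_TK (h : IsTransitive (TK T hT)) : IsTransitive T :=
  fun U V hU hU' hV hV' => by
    show (hittingTimes T U V).Infinite
    simpa only [inter_self] using h.infinite_hittingTimes_pair_of_TK hU hU' hV hV' hV hV'

theorem IsTransitive.infinite_hittingTimes_inter_of_TK [CompactSpace X] [T2Space X]
    (h : IsTransitive (TK T hT)) {U₁ U₂ V₁ V₂ : Set X} (hU₁ : IsOpen U₁) (hU₁' : U₁.Nonempty)
    (hU₂ : IsOpen U₂) (hU₂' : U₂.Nonempty) (hV₁ : IsOpen V₁) (hV₁' : V₁.Nonempty)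
    (hV₂ : IsOpen V₂) (hV₂' : V₂.Nonempty) :
    (hittingTimes T U₁ V₁ ∩ hittingTimes T U₂ V₂).Infinite := by
  -- Common hitting times of `V₁` and `T^[n] ⁻¹' V₂` from `U₁ ∩ T^[n] ⁻¹' U₂` work for both pairs:
  -- for the second one, move the starting point forward by `T^[n]`.
  obtain ⟨n, hn, -⟩ := (h.infinite_hittingTimes_pair_of_TK hU₁ hU₁' hU₂ hU₂' hU₂ hU₂').nonempty
  have hW : IsOpen (U₁ ∩ T^[n] ⁻¹' U₂) := hU₁.inter (hU₂.preimage (hT.iterate n))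
  have hV₂n : (T^[n] ⁻¹' V₂).Nonempty := hV₂'.preimage ((h.of_TK.surjective hT).iterate n)
  refine (h.infinite_hittingTimes_pair_of_TK hW hn hV₁ hV₁' (hV₂.preimage (hT.iterate n))
    hV₂n).mono (inter_subset_inter (hittingTimes_mono inter_subset_left subset_rfl) ?_)
  exact hittingTimes_inter_preimage_subset T n U₁ U₂ V₂

theorem IsTransitive.isWeaklyMixing_of_TK [CompactSpace X] [T2Space X]
    (h : IsTransitive (TK T hT)) : IsWeaklyMixing T := by
  rintro W W' hW ⟨⟨a, b⟩, hab⟩ hW' ⟨⟨c, d⟩, hcd⟩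
  obtain ⟨U₁, U₂, hU₁, hU₂, ha, hb, hUW⟩ := isOpen_prod_iff.1 hW a b hab
  obtain ⟨V₁, V₂, hV₁, hV₂, hc, hd, hVW'⟩ := isOpen_prod_iff.1 hW' c d hcd
  have := h.infinite_hittingTimes_inter_of_TK hU₁ ⟨a, ha⟩ hU₂ ⟨b, hb⟩ hV₁ ⟨c, hc⟩ hV₂ ⟨d, hd⟩
  rw [← hittingTimes_prodMap] at this
  exact this.mono (hittingTimes_mono hUW hVW')

theorem Minimal.forall_inter_nonempty_of_TK {𝓜 : Set (NonemptyCompacts X)}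
    (h𝓜 : Minimal (IsSubsystem (TK T hT)) 𝓜) {m : Set X} (hm : IsClosed m) (hTm : MapsTo T m m)
    (hmeet : ∃ K ∈ 𝓜, ((K : Set X) ∩ m).Nonempty) : ∀ K ∈ 𝓜, ((K : Set X) ∩ m).Nonempty := by
  have hsub : IsSubsystem (TK T hT) (𝓜 ∩ {K | ((K : Set X) ∩ m).Nonempty}) :=
    ⟨hmeet, h𝓜.prop.isClosed.inter (NonemptyCompacts.isClosed_inter_nonempty_of_isClosed hm),
      fun K ⟨hK, x, hxK, hxm⟩ => ⟨h𝓜.prop.mapsTo hK, T x, mem_image_of_mem T hxK, hTm hxm⟩⟩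
  exact inter_eq_left.1 (h𝓜.eq_of_subset hsub inter_subset_left)

theorem IsSubsystem.biUnion_coe_of_TK [CompactSpace X] [T2Space X] {𝓜 : Set (NonemptyCompacts X)}
    (h𝓜 : IsSubsystem (TK T hT) 𝓜) : IsSubsystem T (⋃ K ∈ 𝓜, (K : Set X)) where
  nonempty := let ⟨K, hK⟩ := h𝓜.nonempty; K.nonempty.mono (subset_biUnion_of_mem hK)
  isClosed := (NonemptyCompacts.isCompact_biUnion_coe_of_isCompact h𝓜.isClosed.isCompact).isClosed
  mapsTo := by
    intro x hx
    obtain ⟨K, hK, hxK⟩ := mem_iUnion₂.1 hx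
    exact mem_iUnion₂.2 ⟨TK T hT K, h𝓜.mapsTo hK, mem_image_of_mem T hxK⟩

theorem IsMinimalPoint.exists_mem_isMinimalPoint_of_TK [CompactSpace X] [T2Space X]
    {A : NonemptyCompacts X} (hA : IsMinimalPoint (TK T hT) A) :
    ∃ x ∈ (A : Set X), IsMinimalPoint T x := by
  have h𝓜 : Minimal (IsSubsystem (TK T hT)) (orbitClosure (TK T hT) A) :=
    (isMinimalPoint_iff_minimal hT.nonemptyCompacts_map A).1 hA
  obtain ⟨m, hm𝓜, hm⟩ := h𝓜.prop.biUnion_coe_of_TK.exists_minimal_subset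
  obtain ⟨y, hy⟩ := hm.prop.nonempty
  obtain ⟨K, hK, hyK⟩ := mem_iUnion₂.1 (hm𝓜 hy)
  obtain ⟨x, hxA, hxm⟩ := Minimal.forall_inter_nonempty_of_TK h𝓜 hm.prop.isClosed hm.prop.mapsTo
    ⟨K, hK, y, hyK, hy⟩ A (subset_closure ⟨0, rfl⟩)
  exact ⟨x, hxA, isMinimalPoint_of_mem_minimal hT hm hxm⟩

theorem Dense.minimalPoints_of_TK [CompactSpace X] [T2Space X]
    (h : Dense {A | IsMinimalPoint (TK T hT) A}) : Dense {x | IsMinimalPoint T x} := by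
  refine dense_iff_inter_open.2 fun U hU ⟨u, hu⟩ => ?_
  obtain ⟨A, hAU, hA⟩ := h.inter_open_nonempty {K | (K : Set X) ⊆ U}
    (NonemptyCompacts.isOpen_subsets_of_isOpen hU) ⟨{u}, by simpa using hu⟩
  obtain ⟨x, hxA, hx⟩ := hA.exists_mem_isMinimalPoint_of_TK
  exact ⟨x, hAU hxA, hx⟩

end

theorem hyperspace_Msystem_implies_wm_Msystem_general {X : Type*} [MetricSpace X] [CompactSpace X]
    (T : X → X) (hT : Continuous T)
    (h : IsMSystem (TK T hT)) :
    IsWeaklyMixing T ∧ IsMSystem T :=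
  ⟨h.1.isWeaklyMixing_of_TK, h.1.of_TK, Dense.minimalPoints_of_TK h.2⟩

theorem hyperspace_Msystem_implies_wm_Msystem {X : Type*} [MetricSpace X] [CompactSpace X]
    (T : X → X) (hT : Continuous T) (hTs : Surjective T)
    (h : IsMSystem (TK T hT)) :
    IsWeaklyMixing T ∧ IsMSystem T :=
  hyperspace_Msystem_implies_wm_Msystem_general T hT h

end Paper
end
end

section
/- If (X,T) is a distal topological dynamical system, then the set of distal points of the induced system (M(X), T_M) on the space of probability measures is dense in M(X). -/
open MeasureTheory Topology Set Function TopologicalSpace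

noncomputable section

namespace Paper

/-!
Averages of finitely many Dirac measures are dense in `M(X)`: by the strong law of large numbers,
the empirical measures of an i.i.d. sequence with law `μ` converge weakly to `μ` almost surely.
Each such average is a distal point of `T_M`. Indeed, `x ↦ (δ_{x₁} + ⋯ + δ_{xₙ}) / n` semiconjugates
the distal product system on `Xⁿ` to `T_M` and identifies exactly the tuples that differ by a
permutation of coordinates. As permuting coordinates commutes with the product system, a proximal
pair of such averages lifts, after relabelling one tuple, to a proximal pair in `Xⁿ`, which is
trivial.
-/

open scoped ENNReal BoundedContinuousFunction

section EmpiricalMeasure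

variable {X ι : Type*} [MeasurableSpace X] [Fintype ι] [Nonempty ι]

def empiricalMeasure (x : ι → X) : ProbabilityMeasure X :=
  ⟨(Fintype.card ι : ℝ≥0∞)⁻¹ • ∑ i, Measure.dirac (x i), ⟨by
    simp [ENNReal.inv_mul_cancel (Nat.cast_ne_zero.2 Fintype.card_ne_zero)]⟩⟩

lemma empiricalMeasure_toMeasure (x : ι → X) :
    (empiricalMeasure x : Measure X) = (Fintype.card ι : ℝ≥0∞)⁻¹ • ∑ i, Measure.dirac (x i) :=
  rfl

lemma empiricalMeasure_comp_equiv (x : ι → X) (σ : ι ≃ ι) :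
    empiricalMeasure (x ∘ σ) = empiricalMeasure x := by
  apply ProbabilityMeasure.toMeasure_injective
  simp only [empiricalMeasure_toMeasure, comp_apply, σ.sum_comp (fun i => Measure.dirac (x i))]

lemma map_empiricalMeasure {Y : Type*} [MeasurableSpace Y] {g : X → Y} (hg : Measurable g)
    (x : ι → X) : (empiricalMeasure x).map hg.aemeasurable = empiricalMeasure (g ∘ x) := by
  apply ProbabilityMeasure.toMeasure_injective
  simp only [ProbabilityMeasure.toMeasure_map, empiricalMeasure_toMeasure, Measure.map_smul,
    Measure.map_finset_sum' hg.aemeasurable, Measure.map_dirac' hg, comp_apply]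

lemma empiricalMeasure_singleton [MeasurableSingletonClass X] (x : ι → X) (a : X) :
    (empiricalMeasure x : Measure X) {a} =
      (Fintype.card ι : ℝ≥0∞)⁻¹ * Nat.card {i // x i = a} := by
  classical
  simp [empiricalMeasure_toMeasure, Measure.finsetSum_apply, Set.indicator,
    Nat.card_eq_fintype_card, Fintype.card_subtype, eq_comm]

lemma exists_equiv_of_empiricalMeasure_eq [MeasurableSingletonClass X] {x y : ι → X}
    (h : empiricalMeasure x = empiricalMeasure y) : ∃ σ : ι ≃ ι, y = x ∘ σ := by
  classical
  have hcard (a : X) : Nat.card {i // y i = a} = Nat.card {i // x i = a} := by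
    have := congrArg (fun μ : ProbabilityMeasure X => (μ : Measure X) {a}) h
    simp only [empiricalMeasure_singleton] at this
    exact_mod_cast ((ENNReal.mul_right_inj (by simp) (by simp)).1 this).symm
  exact ⟨Equiv.ofFiberEquiv fun a =>
      Fintype.equivOfCardEq (by simpa [Nat.card_eq_fintype_card] using hcard a),
    funext fun i => (Equiv.ofFiberEquiv_map _ i).symm⟩

lemma integral_empiricalMeasure [TopologicalSpace X] [OpensMeasurableSpace X]
    (x : ι → X) (f : X →ᵇ ℝ) :
    ∫ a, f a ∂(empiricalMeasure x : Measure X) = (Fintype.card ι : ℝ)⁻¹ * ∑ i, f (x i) := by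
  rw [empiricalMeasure_toMeasure, integral_smul_measure,
    integral_finsetSum_measure fun i _ => f.integrable _]
  simp [integral_dirac' _ _ f.continuous.stronglyMeasurable]

lemma continuous_empiricalMeasure [TopologicalSpace X] [OpensMeasurableSpace X] :
    Continuous (empiricalMeasure : (ι → X) → ProbabilityMeasure X) := by
  refine continuous_iff_continuousAt.2 fun x => ?_
  rw [ContinuousAt, ProbabilityMeasure.tendsto_iff_forall_integral_tendsto]
  intro f
  simp only [integral_empiricalMeasure]
  exact (continuous_const.mul (continuous_finsetSum _ fun i _ =>
    f.continuous.comp (continuous_apply i))).tendsto x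

end EmpiricalMeasure

lemma _root_.Function.Semiconj.prodMap {α β : Type*} {F : α → α} {G : β → β} {π : α → β}
    (h : Semiconj π F G) : Semiconj (Prod.map π π) (Prod.map F F) (Prod.map G G) :=
  fun p => Prod.ext (h p.1) (h p.2)

section Proximality

variable {α β : Type*} [TopologicalSpace α] [TopologicalSpace β]

lemma isProximalPair_iff_exists_diag_mem_orbitClosure {T : α → α} {x y : α} :
    IsProximalPair T x y ↔ ∃ z, (z, z) ∈ orbitClosure (Prod.map T T) (x, y) := by
  simp only [IsProximalPair, orbitClosure, Prod.map_iterate, Prod.map_apply]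

lemma image_orbitClosure_subset {F : α → α} {G : β → β} {π : α → β} (hπ : Continuous π)
    (h : Semiconj π F G) (x : α) : π '' orbitClosure F x ⊆ orbitClosure G (π x) := by
  rintro _ ⟨y, hy, rfl⟩
  refine map_mem_closure hπ hy ?_
  rintro _ ⟨n, rfl⟩
  exact ⟨n, ((h.iterate_right n).eq x).symm⟩

lemma image_orbitClosure [CompactSpace α] [T2Space β] {F : α → α} {G : β → β} {π : α → β}
    (hπ : Continuous π) (h : Semiconj π F G) (x : α) :
    π '' orbitClosure F x = orbitClosure G (π x) := by
  refine (image_orbitClosure_subset hπ h x).antisymm ?_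
  rw [orbitClosure, orbitClosure, image_closure_of_isCompact isClosed_closure.isCompact
    hπ.continuousOn, ← range_comp]
  refine closure_mono (range_subset_iff.2 fun n => ⟨n, ?_⟩)
  exact (h.iterate_right n).eq x

lemma IsProximalPair.map {F : α → α} {G : β → β} {π : α → β} (hπ : Continuous π)
    (h : Semiconj π F G) {x y : α} (hxy : IsProximalPair F x y) :
    IsProximalPair G (π x) (π y) := by
  rw [isProximalPair_iff_exists_diag_mem_orbitClosure] at hxy ⊢
  obtain ⟨z, hz⟩ := hxy
  exact ⟨π z, image_orbitClosure_subset (hπ.prodMap hπ) h.prodMap _ ⟨(z, z), hz, rfl⟩⟩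

lemma IsProximalPair.exists_of_map [CompactSpace α] [T2Space β] {F : α → α} {G : β → β}
    {π : α → β} (hπ : Continuous π) (h : Semiconj π F G) {x y : α}
    (hxy : IsProximalPair G (π x) (π y)) :
    ∃ u v, (u, v) ∈ orbitClosure (Prod.map F F) (x, y) ∧ π u = π v := by
  rw [isProximalPair_iff_exists_diag_mem_orbitClosure] at hxy
  obtain ⟨z, hz⟩ := hxy
  rw [← Prod.map_apply π π, ← image_orbitClosure (hπ.prodMap hπ) h.prodMap] at hz
  obtain ⟨⟨u, v⟩, huv, heq⟩ := hz
  exact ⟨u, v, huv, (congrArg Prod.fst heq).trans (congrArg Prod.snd heq).symm⟩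

lemma IsDistalSystem.piMap {ι : Type*} {T : α → α} (hT : IsDistalSystem T) :
    IsDistalSystem (fun (x : ι → α) i => T (x i)) :=
  fun _ _ hxy => funext fun i =>
    hT _ _ (hxy.map (continuous_apply i) fun _ => rfl)

end Proximality

lemma isDistalPoint_empiricalMeasure {X ι : Type*} [MetricSpace X] [CompactSpace X]
    [MeasurableSpace X] [BorelSpace X] [Fintype ι] [Nonempty ι] {T : X → X} (hT : Continuous T)
    (h : IsDistalSystem T) (x : ι → X) : IsDistalPoint (TM T hT) (empiricalMeasure x) := by
  set F : (ι → X) → (ι → X) := fun y i => T (y i)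
  have hF : Semiconj empiricalMeasure F (TM T hT) := fun y =>
    (map_empiricalMeasure hT.measurable y).symm
  intro ν hν hprox
  rw [← image_orbitClosure continuous_empiricalMeasure hF] at hν
  obtain ⟨y, -, rfl⟩ := hν
  obtain ⟨u, v, huv, huv_eq⟩ := hprox.exists_of_map continuous_empiricalMeasure hF
  obtain ⟨σ, rfl⟩ := exists_equiv_of_empiricalMeasure_eq huv_eq
  have hrelabel : Semiconj (Prod.map id (· ∘ σ.symm)) (Prod.map F F) (Prod.map F F) :=
    fun _ => rfl
  have hprox' : IsProximalPair F x (y ∘ σ.symm) :=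
    isProximalPair_iff_exists_diag_mem_orbitClosure.2
      ⟨u, image_orbitClosure_subset (by fun_prop) hrelabel _ ⟨_, huv, by simp [comp_assoc]⟩⟩
  rw [h.piMap _ _ hprox', empiricalMeasure_comp_equiv]

section Density

open Filter ProbabilityTheory

variable {X : Type*} [TopologicalSpace X] [MeasurableSpace X] [OpensMeasurableSpace X]

lemma ProbabilityMeasure.mem_closure_of_forall_finset_integral
    {S : Set (ProbabilityMeasure X)} {μ : ProbabilityMeasure X}
    (h : ∀ (s : Finset (X →ᵇ ℝ)) (ε : ℝ), 0 < ε → ∃ ν ∈ S, ∀ f ∈ s,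
      dist (∫ a, f a ∂(ν : Measure X)) (∫ a, f a ∂(μ : Measure X)) < ε) :
    μ ∈ closure S := by
  classical
  choose ν hνS hν using fun p : Finset (X →ᵇ ℝ) × ℕ =>
    h p.1 (1 / (p.2 + 1)) Nat.one_div_pos_of_nat
  refine mem_closure_of_tendsto (f := ν) (b := atTop) ?_ (Eventually.of_forall hνS)
  rw [ProbabilityMeasure.tendsto_iff_forall_integral_tendsto]
  refine fun f => Metric.tendsto_atTop.2 fun ε hε => ?_
  obtain ⟨K, hK⟩ := exists_nat_one_div_lt hε
  refine ⟨({f}, K), fun p hp => (hν p f (hp.1 (Finset.mem_singleton_self f))).trans_le ?_⟩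
  exact (Nat.one_div_le_one_div hp.2).trans hK.le

lemma ae_tendsto_integral_empiricalMeasure {Ω : Type*} [MeasurableSpace Ω] {P : Measure Ω}
    [IsProbabilityMeasure P] {μ : Measure X} {Y : ℕ → Ω → X} (hY : ∀ i, Measurable (Y i))
    (hlaw : ∀ i, HasLaw (Y i) μ P) (hindep : iIndepFun Y P) (f : X →ᵇ ℝ) :
    ∀ᵐ ω ∂P, Tendsto
      (fun n => ∫ a, f a ∂(empiricalMeasure fun i : Fin (n + 1) => Y i ω : Measure X))
      atTop (𝓝 (∫ a, f a ∂μ)) := by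
  have hf : Measurable f := f.continuous.measurable
  have hint : Integrable (f ∘ Y 0) P := Integrable.of_bound (hf.comp (hY 0)).aestronglyMeasurable
    ‖f‖ (Eventually.of_forall fun ω => f.norm_coe_le_norm _)
  have hslln := strong_law_ae (fun i => f ∘ Y i) hint
    (fun i j hij => (hindep.comp (fun _ => f) fun _ => hf).indepFun hij)
    (fun i => ((hlaw i).identDistrib (hlaw 0)).comp hf)
  filter_upwards [hslln] with ω hω
  rw [(hlaw 0).integral_comp hf.aestronglyMeasurable] at hω
  convert (tendsto_add_atTop_iff_nat 1).2 hω using 2 with n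
  simp [integral_empiricalMeasure, Fin.sum_univ_eq_sum_range (fun i => f (Y i ω))]

lemma dense_empiricalMeasure :
    Dense {μ : ProbabilityMeasure X |
      ∃ (n : ℕ) (x : Fin (n + 1) → X), empiricalMeasure x = μ} := by
  intro μ
  obtain ⟨Ω, _, P, Y, hY, hlaw, hindep, _⟩ := exists_iid ℕ (μ : Measure X)
  refine ProbabilityMeasure.mem_closure_of_forall_finset_integral fun s ε hε => ?_
  have hae : ∀ᵐ ω ∂P, ∀ f ∈ s, Tendsto
      (fun n => ∫ a, f a ∂(empiricalMeasure fun i : Fin (n + 1) => Y i ω : Measure X))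
      atTop (𝓝 (∫ a, f a ∂(μ : Measure X))) :=
    (eventually_all_finset s).2 fun f _ => ae_tendsto_integral_empiricalMeasure hY hlaw hindep f
  obtain ⟨ω, hω⟩ := hae.exists
  obtain ⟨n, hn⟩ := ((eventually_all_finset s).2 fun f hf =>
    (hω f hf).eventually (Metric.ball_mem_nhds _ hε)).exists
  exact ⟨_, ⟨n, _, rfl⟩, hn⟩

end Density

theorem distal_implies_dense_distal_points_on_measures_general {X : Type*}
    [MetricSpace X] [CompactSpace X] [MeasurableSpace X] [BorelSpace X]
    (T : X → X) (hT : Continuous T)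
    (h : IsDistalSystem T) :
    Dense {μ : ProbabilityMeasure X | IsDistalPoint (TM T hT) μ} :=
  dense_empiricalMeasure.mono <| by
    rintro _ ⟨n, x, rfl⟩
    exact isDistalPoint_empiricalMeasure hT h x

theorem distal_implies_dense_distal_points_on_measures {X : Type*}
    [MetricSpace X] [CompactSpace X] [MeasurableSpace X] [BorelSpace X]
    (T : X → X) (hT : Continuous T) (hTs : Surjective T)
    (h : IsDistalSystem T) :
    Dense {μ : ProbabilityMeasure X | IsDistalPoint (TM T hT) μ} :=
  distal_implies_dense_distal_points_on_measures_general T hT h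

end Paper
end
end

section
/- Let X = {0} ∪ {1/n : n ∈ ℕ} and let T fix 0 and 1 and cyclically permute each block {1/2ⁿ, ..., 1/(2^{n+1}−1)} as T(1/2ⁿ)=1/(2ⁿ+1), ..., T(1/(2^{n+1}−1))=1/2ⁿ. Then (X,T) is pointwise periodic, but the measure μ = Σₙ (1/2ⁿ) δ_{1/2^{n−1}} is not a periodic point of the induced map T_M on M(X). -/
open MeasureTheory Topology Set Function TopologicalSpace

noncomputable section

namespace Paper

/-!
Each block `{1/2ⁿ, …, 1/(2ⁿ⁺¹ - 1)}` is a `T`-cycle of length `2ⁿ`, so every point is periodic.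
If `T_M^k μ = μ`, then `T^k` maps atoms of `μ` to atoms of `μ`; but it moves the atom `1/2ᵏ⁺¹`
to `1/(2ᵏ⁺¹ + k)`, which lies strictly inside the same block and is not a power of `1/2`.
-/

section Chain

variable {α : Type*} {T : α → α} {P : ℕ → α → Prop} {a b : ℕ}

theorem iterate_of_step (hstep : ∀ i, a ≤ i → i < b → ∀ x, P i x → P (i + 1) (T x)) :
    ∀ m j x, a ≤ j → j + m ≤ b → P j x → P (j + m) (T^[m] x) := by
  intro m
  induction m with
  | zero => intro j x _ _ hx; exact hx
  | succ m ih =>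
    intro j x haj hjb hx
    rw [Function.iterate_succ_apply', ← add_assoc]
    exact hstep (j + m) (by omega) (by omega) _ (ih j x haj (by omega) hx)

theorem iterate_of_step_of_wrap (hstep : ∀ i, a ≤ i → i < b → ∀ x, P i x → P (i + 1) (T x))
    (hwrap : ∀ x, P b x → P a (T x)) {j : ℕ} {x : α} (haj : a ≤ j) (hjb : j ≤ b) (hx : P j x) :
    P j (T^[b + 1 - a] x) := by
  have hend : P b (T^[b - j] x) := by
    simpa [Nat.add_sub_cancel' hjb] using iterate_of_step hstep (b - j) j x haj (by omega) hx
  have hback := iterate_of_step hstep (j - a) a _ le_rfl (by omega) (hwrap _ hend)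
  rwa [Nat.add_sub_cancel' haj, ← Function.iterate_succ_apply' T, ← Function.iterate_add_apply,
    show j - a + (b - j).succ = b + 1 - a by omega] at hback

end Chain

section Blocks

variable {X : Set ℝ} {T : X → X}

theorem iterate_apply_of_eq_inv_two_pow
    (hTmid : ∀ n k : ℕ, 0 < n → 2 ^ n ≤ k → k < 2 ^ (n + 1) - 1 →
      ∀ x : X, (x : ℝ) = 1 / (k : ℝ) → (T x : ℝ) = 1 / ((k : ℝ) + 1))
    {n k : ℕ} (hn : 0 < n) (hk : k < 2 ^ n) {x : X} (hx : (x : ℝ) = 1 / (2 : ℝ) ^ n) :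
    (T^[k] x : ℝ) = 1 / ((2 : ℝ) ^ n + k) := by
  have h := iterate_of_step (P := fun i (x : X) => (x : ℝ) = 1 / (i : ℝ)) (a := 2 ^ n)
    (b := 2 ^ (n + 1) - 1) (fun i h₁ h₂ x hx => by simpa using hTmid n i hn h₁ h₂ x hx)
    k (2 ^ n) x le_rfl (by rw [pow_succ]; omega) (by simpa using hx)
  simpa using h

theorem iterate_two_pow_eq_self_of_mem_block
    (hTmid : ∀ n k : ℕ, 0 < n → 2 ^ n ≤ k → k < 2 ^ (n + 1) - 1 →
      ∀ x : X, (x : ℝ) = 1 / (k : ℝ) → (T x : ℝ) = 1 / ((k : ℝ) + 1))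
    (hTend : ∀ n : ℕ, 0 < n → ∀ x : X, (x : ℝ) = 1 / ((2 : ℝ) ^ (n + 1) - 1) →
      (T x : ℝ) = 1 / (2 : ℝ) ^ n)
    {n j : ℕ} (hn : 0 < n) (hj : 2 ^ n ≤ j) (hj' : j < 2 ^ (n + 1)) {x : X}
    (hx : (x : ℝ) = 1 / (j : ℝ)) : T^[2 ^ n] x = x := by
  have hpow : 2 ^ (n + 1) = 2 * 2 ^ n := by ring
  have hwrap : ∀ x : X, (x : ℝ) = 1 / ((2 ^ (n + 1) - 1 : ℕ) : ℝ) →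
      (T x : ℝ) = 1 / ((2 ^ n : ℕ) : ℝ) := fun x hx => by
    rw [Nat.cast_sub Nat.one_le_two_pow] at hx
    simpa using hTend n hn x (by simpa using hx)
  have h := iterate_of_step_of_wrap (P := fun i (x : X) => (x : ℝ) = 1 / (i : ℝ))
    (fun i h₁ h₂ x hx => by simpa using hTmid n i hn h₁ h₂ x hx) hwrap hj (by omega) hx
  rw [show 2 ^ (n + 1) - 1 + 1 - 2 ^ n = 2 ^ n by omega] at h
  exact Subtype.ext (h.trans hx.symm)

theorem isPointwisePeriodic_of_blocks
    (hX : X ⊆ {0} ∪ {x : ℝ | ∃ n : ℕ, 0 < n ∧ x = 1 / (n : ℝ)})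
    (hT0 : ∀ x : X, (x : ℝ) = 0 → T x = x)
    (hT1 : ∀ x : X, (x : ℝ) = 1 → T x = x)
    (hTmid : ∀ n k : ℕ, 0 < n → 2 ^ n ≤ k → k < 2 ^ (n + 1) - 1 →
      ∀ x : X, (x : ℝ) = 1 / (k : ℝ) → (T x : ℝ) = 1 / ((k : ℝ) + 1))
    (hTend : ∀ n : ℕ, 0 < n → ∀ x : X, (x : ℝ) = 1 / ((2 : ℝ) ^ (n + 1) - 1) →
      (T x : ℝ) = 1 / (2 : ℝ) ^ n) :
    IsPointwisePeriodic T := by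
  intro x
  rcases hX x.2 with hx0 | ⟨k, hk, hxk⟩
  · exact ⟨1, one_pos, hT0 x hx0⟩
  obtain rfl | hk2 := (Nat.one_le_iff_ne_zero.2 hk.ne').eq_or_lt
  · exact ⟨1, one_pos, hT1 x (by simpa using hxk)⟩
  exact ⟨2 ^ Nat.log 2 k, by positivity, iterate_two_pow_eq_self_of_mem_block hTmid hTend
    (Nat.log_pos one_lt_two hk2) (Nat.pow_log_le_self 2 hk.ne')
    (Nat.lt_pow_succ_log_self one_lt_two k) hxk⟩

end Blocks

theorem two_pow_ne_two_pow_add {m n k : ℕ} (hk : 0 < k) (hkn : k < 2 ^ n) : 2 ^ m ≠ 2 ^ n + k := by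
  intro h
  have h₁ : n < m := (Nat.pow_lt_pow_iff_right one_lt_two).1 (by omega)
  have h₂ : m < n + 1 := (Nat.pow_lt_pow_iff_right one_lt_two).1 (by rw [pow_succ]; omega)
  omega

section Atoms

variable {α ι : Type*} [MeasurableSpace α] [MeasurableSingletonClass α]

theorem sum_smul_dirac_apply_singleton_of_notMem_range {c : ι → ENNReal} {p : ι → α} {y : α}
    (hy : y ∉ range p) : Measure.sum (fun i => c i • Measure.dirac (p i)) {y} = 0 := by
  rw [Measure.sum_apply _ (measurableSet_singleton y)]
  refine ENNReal.tsum_eq_zero.2 fun i => ?_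
  rw [Measure.smul_apply, Measure.dirac_apply, indicator_of_notMem (s := {y}) fun h => hy ⟨i, h⟩,
    smul_zero]

theorem le_sum_smul_dirac_apply_singleton (c : ι → ENNReal) (p : ι → α) (i : ι) :
    c i ≤ Measure.sum (fun i => c i • Measure.dirac (p i)) {p i} := by
  rw [Measure.sum_apply _ (measurableSet_singleton (p i))]
  refine le_trans ?_ (ENNReal.le_tsum i)
  simp

theorem apply_mem_range_of_map_sum_smul_dirac_eq_self {c : ι → ENNReal} {p : ι → α}
    (hc : ∀ i, c i ≠ 0) {f : α → α} (hf : Measurable f)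
    (hinv : (Measure.sum fun i => c i • Measure.dirac (p i)).map f =
      Measure.sum fun i => c i • Measure.dirac (p i)) (i : ι) :
    f (p i) ∈ range p := by
  by_contra hy
  have hpos : c i ≤ (Measure.sum fun i => c i • Measure.dirac (p i)).map f {f (p i)} :=
    calc c i ≤ Measure.sum (fun i => c i • Measure.dirac (p i)) {p i} :=
          le_sum_smul_dirac_apply_singleton c p i
      _ ≤ Measure.sum (fun i => c i • Measure.dirac (p i)) (f ⁻¹' {f (p i)}) :=
          measure_mono fun _ hx => congrArg f hx
      _ ≤ _ := Measure.le_map_apply hf.aemeasurable _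
  rw [hinv, sum_smul_dirac_apply_singleton_of_notMem_range hy] at hpos
  exact hc i (nonpos_iff_eq_zero.1 hpos)

end Atoms

theorem toMeasure_iterate_TM {α : Type*} [TopologicalSpace α] [MeasurableSpace α] [BorelSpace α]
    {T : α → α} (hT : Continuous T) (m : ℕ) (ν : ProbabilityMeasure α) :
    (((TM T hT)^[m] ν : ProbabilityMeasure α) : Measure α) = (ν : Measure α).map T^[m] := by
  induction m generalizing ν with
  | zero => simp
  | succ m ih =>
    rw [Function.iterate_succ_apply, ih, TM, ProbabilityMeasure.toMeasure_map,
      Measure.map_map (hT.measurable.iterate m) hT.measurable, Function.iterate_succ]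

theorem pointwise_periodic_not_measure_periodic
    (X5 : Set ℝ) (hX5 : X5 = {0} ∪ {x : ℝ | ∃ n : ℕ, 0 < n ∧ x = 1 / (n : ℝ)})
    (T : X5 → X5) (hTc : Continuous T)
    (hT0 : ∀ x : X5, (x : ℝ) = 0 → T x = x)
    (hT1 : ∀ x : X5, (x : ℝ) = 1 → T x = x)
    (hTmid : ∀ n k : ℕ, 0 < n → 2 ^ n ≤ k → k < 2 ^ (n + 1) - 1 →
      ∀ x : X5, (x : ℝ) = 1 / (k : ℝ) → (T x : ℝ) = 1 / ((k : ℝ) + 1))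
    (hTend : ∀ n : ℕ, 0 < n → ∀ x : X5, (x : ℝ) = 1 / ((2 : ℝ) ^ (n + 1) - 1) →
      (T x : ℝ) = 1 / (2 : ℝ) ^ n)
    (p : ℕ → X5) (hp : ∀ n : ℕ, (p n : ℝ) = 1 / (2 : ℝ) ^ n)
    (μ : ProbabilityMeasure X5)
    (hμ : (μ : Measure X5) =
      Measure.sum (fun n : ℕ => ((2 : ENNReal) ^ (n + 1))⁻¹ • Measure.dirac (p n))) :
    IsPointwisePeriodic T ∧ ¬ IsPeriodicPoint (TM T hTc) μ := by
  refine ⟨isPointwisePeriodic_of_blocks hX5.subset hT0 hT1 hTmid hTend, ?_⟩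
  rintro ⟨k, hk, hper⟩
  have hinv : (μ : Measure X5).map T^[k] = μ := by rw [← toMeasure_iterate_TM hTc, hper]
  rw [hμ] at hinv
  obtain ⟨m, hm⟩ := apply_mem_range_of_map_sum_smul_dirac_eq_self (by simp)
    (hTc.measurable.iterate k) hinv (k + 1)
  have hk' : k < 2 ^ (k + 1) :=
    Nat.lt_two_pow_self.trans (Nat.pow_lt_pow_right one_lt_two k.lt_succ_self)
  have hq := iterate_apply_of_eq_inv_two_pow hTmid k.succ_pos hk' (hp (k + 1))
  rw [← hm, hp, one_div, one_div, inv_inj] at hq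
  exact two_pow_ne_two_pow_add hk hk' (by exact_mod_cast hq)

end Paper
end
end
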